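/- For every real R ≥ 1 and every γ ∈ [0,1), the integral ∫₀^R δ^{−γ/2} √(log(1 + δ^{−1})) dδ is at most 4R. -/

import Mathlib

/-!
Since `1 + t² ≤ exp t` for `t ≥ 0`, we have `log (1 + x) ≤ √x`, so the integrand is at most
`δ ^ (-(γ/2 + 1/4))`. The exponent `s - 1` of this majorant has `s = 3/4 - γ/2 ∈ (1/4, 3/4]`, and
`∫₀^R δ ^ (s - 1) dδ = R ^ s / s ≤ R / s < 4 R` for `R ≥ 1`.
-/

open MeasureTheory Set

namespace Real

lemma one_add_sq_le_exp {t : ℝ} (ht : 0 ≤ t) : 1 + t ^ 2 ≤ exp t := by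
  have h := sum_le_exp_of_nonneg ht 4
  simp only [Finset.sum_range_succ, Finset.sum_range_zero, Nat.factorial] at h
  norm_num at h
  nlinarith [mul_nonneg ht (sq_nonneg (t - 3 / 2))]

lemma log_one_add_le_sqrt {x : ℝ} (hx : 0 ≤ x) : log (1 + x) ≤ √x := by
  rw [log_le_iff_le_exp (by positivity)]
  simpa [sq_sqrt hx] using one_add_sq_le_exp (sqrt_nonneg x)

lemma sqrt_log_one_add_inv_le_rpow {δ : ℝ} (hδ : 0 < δ) :
    √(log (1 + δ⁻¹)) ≤ δ ^ (-(1 / 4 : ℝ)) := by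
  have hsqrt : √(√δ⁻¹) = δ ^ (-(1 / 4 : ℝ)) := by
    rw [sqrt_eq_rpow, sqrt_eq_rpow, ← rpow_mul (by positivity), inv_rpow hδ.le,
      ← rpow_neg hδ.le]
    norm_num
  exact hsqrt ▸ sqrt_le_sqrt (log_one_add_le_sqrt (inv_nonneg.2 hδ.le))

end Real

lemma integrableOn_Ioc_zero_rpow_sub_one {s R : ℝ} (hs : 0 < s) (hR : 0 ≤ R) :
    IntegrableOn (fun δ : ℝ => δ ^ (s - 1)) (Ioc 0 R) := by
  rw [← intervalIntegrable_iff_integrableOn_Ioc_of_le hR]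
  exact intervalIntegral.intervalIntegrable_rpow' (by linarith)

lemma integral_Ioc_zero_rpow_sub_one {s R : ℝ} (hs : 0 < s) (hR : 0 ≤ R) :
    ∫ δ in Ioc 0 R, δ ^ (s - 1) = R ^ s / s := by
  rw [← intervalIntegral.integral_of_le hR, integral_rpow (Or.inl (by linarith)),
    Real.zero_rpow (by linarith)]
  simp

lemma integral_Ioc_zero_rpow_sub_one_le {s R : ℝ} (hs : 0 < s) (hs1 : s ≤ 1) (hR : 1 ≤ R) :
    ∫ δ in Ioc 0 R, δ ^ (s - 1) ≤ R / s := by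
  rw [integral_Ioc_zero_rpow_sub_one hs (by linarith)]
  gcongr
  simpa using Real.rpow_le_rpow_of_exponent_le hR hs1

/-- For every real `R ≥ 1` and every `γ ∈ [0,1)`, the integral
`∫₀^R δ^(−γ/2) √(log(1 + δ⁻¹)) dδ` is at most `4R`. -/
theorem entropy_integral_le_four_mul :
    ∀ R : ℝ, 1 ≤ R → ∀ γ : ℝ, 0 ≤ γ → γ < 1 →
      (∫ δ in Set.Ioc (0 : ℝ) R, δ ^ (-(γ / 2)) * Real.sqrt (Real.log (1 + δ⁻¹))) ≤ 4 * R := by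
  intro R hR γ hγ0 hγ1
  set s : ℝ := 3 / 4 - γ / 2 with hs_def
  have hs : 1 / 4 < s := by linarith
  have hs1 : s ≤ 1 := by linarith
  have hs0 : 0 < s := by linarith
  have hR0 : 0 ≤ R := by linarith
  have hbound : ∀ δ ∈ Ioc (0 : ℝ) R,
      δ ^ (-(γ / 2)) * √(Real.log (1 + δ⁻¹)) ≤ δ ^ (s - 1) := by
    intro δ hδ
    calc δ ^ (-(γ / 2)) * √(Real.log (1 + δ⁻¹)) ≤ δ ^ (-(γ / 2)) * δ ^ (-(1 / 4 : ℝ)) :=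
          mul_le_mul_of_nonneg_left (Real.sqrt_log_one_add_inv_le_rpow hδ.1)
            (Real.rpow_nonneg hδ.1.le _)
      _ = δ ^ (s - 1) := by rw [← Real.rpow_add hδ.1, hs_def]; ring_nf
  calc (∫ δ in Ioc (0 : ℝ) R, δ ^ (-(γ / 2)) * √(Real.log (1 + δ⁻¹)))
      ≤ ∫ δ in Ioc (0 : ℝ) R, δ ^ (s - 1) :=
        integral_mono_of_nonneg
          (ae_restrict_of_forall_mem measurableSet_Ioc fun δ hδ => by have := hδ.1; positivity)
          (integrableOn_Ioc_zero_rpow_sub_one hs0 hR0)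
          (ae_restrict_of_forall_mem measurableSet_Ioc hbound)
    _ ≤ R / s := integral_Ioc_zero_rpow_sub_one_le hs0 hs1 hR
    _ ≤ 4 * R := by rw [div_le_iff₀ hs0]; nlinarith
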